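/- For every real ζ with 0 ≤ ζ < 0.046, one has 0.092 − 2ζ − 2·ξ₁(ζ) > 0; that is, 0.092 − 2ζ − ξ₁(ζ) > ξ₁(ζ). Moreover, 0.092 − 2·0.046 − 2·ξ₁(0.046) = 0. -/
import Mathlib


/-- The coefficient `b(ζ)` (with `χ = 0.454`). -/
noncomputable def bcoef (ζ : ℝ) : ℝ := -0.18 * 0.454 + 0.09 * ζ - 2.337

/-- The coefficient `c(ζ)` (with `χ = 0.454`). -/
noncomputable def ccoef (ζ : ℝ) : ℝ :=
  16 * 0.454 ^ 2 - 32 * ζ ^ 2 - 16 * 0.454 + 8 * ζ - 16 * 0.454 * ζ + 4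

/-- The discriminant `Δ(ζ) = b(ζ)² − 4ac(ζ)` with `a = 2.382`. -/
noncomputable def Δcoef (ζ : ℝ) : ℝ := (bcoef ζ) ^ 2 - 4 * 2.382 * (ccoef ζ)

/-- The root `ξ₁(ζ) = (−b(ζ) − √Δ(ζ)) / (2a)` with `a = 2.382`. -/
noncomputable def xi1 (ζ : ℝ) : ℝ := (-(bcoef ζ) - Real.sqrt (Δcoef ζ)) / (2 * 2.382)

/-- for `0 ≤ ζ < 0.046` one has `0.092 − 2ζ − 2ξ₁(ζ) > 0`
(i.e. `0.092 − 2ζ − ξ₁(ζ) > ξ₁(ζ)`); moreover `0.092 − 2·0.046 − 2·ξ₁(0.046) = 0`. -/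
theorem xi1_slack_pos :
    (∀ ζ : ℝ, 0 ≤ ζ → ζ < 0.046 → 0 < 0.092 - 2 * ζ - 2 * xi1 ζ) ∧
      0.092 - 2 * 0.046 - 2 * xi1 0.046 = 0 := by
  constructor
  · intro ζ hζ hζ'
    have ht : (0:ℝ) ≤ 2.199576 + 4.674 * ζ := by linarith
    have hkey : (2.199576 + 4.674 * ζ) ^ 2 < Δcoef ζ := by
      unfold Δcoef bcoef ccoef
      nlinarith [sq_nonneg (0.046 - ζ), sq_nonneg ζ]
    have hs : 2.199576 + 4.674 * ζ < Real.sqrt (Δcoef ζ) :=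
      (Real.lt_sqrt ht).mpr hkey
    unfold xi1 bcoef
    have h : (-(-0.18 * 0.454 + 0.09 * ζ - 2.337) - Real.sqrt (Δcoef ζ)) / (2 * 2.382)
        < 0.046 - ζ := by
      rw [div_lt_iff₀ (by norm_num : (0:ℝ) < 2 * 2.382)]
      nlinarith [hs]
    linarith
  · have hΔ : Δcoef 0.046 = 2.41458 ^ 2 := by
      unfold Δcoef bcoef ccoef; norm_num
    have hs : Real.sqrt (Δcoef 0.046) = 2.41458 := by
      rw [hΔ, Real.sqrt_sq (by norm_num)]
    unfold xi1 bcoef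
    rw [hs]
    norm_num
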